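/- Let Ã be an n×n Hermitian matrix of the 3×3 block form Ã = [[Λ̂₁, 0, R₁*],[0, Λ̂₂, R₂*],[R₁, R₂, A₃]] as described. Suppose X̃₁ ∈ ℂ^{n×k₁} has orthonormal columns and satisfies ÃX̃₁ = X̃₁Λ₁ for a real diagonal k₁×k₁ matrix Λ₁, and partition its rows conformally as X̃₁ = (W; Y; Z). Assume gap > 0 and Gap > ‖R₂‖²/gap. Then ‖[Y; Z]‖_F ≤ (‖R₁‖_F / (Gap − ‖R₂‖²/gap)) · √(1 + ‖R₂‖²/gap²). -/

import Mathlib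

/-!
Rows `k₁+1..k` and `k+1..n` of `Ã X̃₁ = X̃₁ Λ₁` are the Sylvester equations
`Y Λ₁ - Λ̂₂ Y = R₂ᴴ Z` and `Z Λ₁ - A₃ Z = R₁ W + R₂ Y`. After a unitary diagonalisation of `A₃`
(which leaves Frobenius norms unchanged) each equation reads entrywise `(λ - μ) x = rhs`, so the
separation of the two spectra bounds the unknown by the right-hand side:
`gap ‖Y‖_F ≤ ‖R₂‖ ‖Z‖_F` and, as `‖W‖ ≤ 1`, `Gap ‖Z‖_F ≤ ‖R₁‖_F + ‖R₂‖ ‖Y‖_F`.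
Eliminating `‖Y‖_F` bounds `‖Z‖_F`, and `‖[Y; Z]‖_F² ≤ (1 + ‖R₂‖²/gap²) ‖Z‖_F²`.
-/

open Matrix
open scoped Matrix.Norms.L2Operator

/-- The Frobenius norm of a complex matrix, written explicitly. -/
noncomputable def frobNorm {α β : Type*} [Fintype α] [Fintype β] (M : Matrix α β ℂ) : ℝ :=
  Real.sqrt (∑ i, ∑ j, ‖M i j‖ ^ 2)

section Frobenius

variable {l m n : Type*} [Fintype l] [Fintype m] [Fintype n]

lemma frobNorm_nonneg (M : Matrix m n ℂ) : 0 ≤ frobNorm M := Real.sqrt_nonneg _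

lemma sq_frobNorm (M : Matrix m n ℂ) : frobNorm M ^ 2 = ∑ i, ∑ j, ‖M i j‖ ^ 2 :=
  Real.sq_sqrt (by positivity)

lemma frobNorm_eq_norm_toLp (M : Matrix m n ℂ) :
    frobNorm M = ‖WithLp.toLp 2 fun p : m × n => M p.1 p.2‖ := by
  rw [EuclideanSpace.norm_eq, frobNorm, Fintype.sum_prod_type]

lemma frobNorm_add_le (A B : Matrix m n ℂ) : frobNorm (A + B) ≤ frobNorm A + frobNorm B := by
  simp only [frobNorm_eq_norm_toLp, Matrix.add_apply]
  exact norm_add_le (WithLp.toLp 2 fun p : m × n => A p.1 p.2) (WithLp.toLp 2 fun p => B p.1 p.2)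

lemma frobNorm_fromRows (A : Matrix l n ℂ) (B : Matrix m n ℂ) :
    frobNorm (fromRows A B) = √(frobNorm A ^ 2 + frobNorm B ^ 2) := by
  rw [sq_frobNorm, sq_frobNorm, frobNorm, Fintype.sum_sum_type]
  rfl

lemma frobNorm_conjTranspose (M : Matrix m n ℂ) : frobNorm Mᴴ = frobNorm M := by
  rw [frobNorm, frobNorm, Finset.sum_comm]
  simp

lemma sq_frobNorm_eq_sum_sq_norm_col (M : Matrix m n ℂ) :
    frobNorm M ^ 2 = ∑ j, ‖WithLp.toLp 2 fun i => M i j‖ ^ 2 := by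
  rw [sq_frobNorm, Finset.sum_comm]
  refine Finset.sum_congr rfl fun j _ => ?_
  rw [EuclideanSpace.norm_eq, Real.sq_sqrt (by positivity)]

lemma frobNorm_mul_le_l2_opNorm_mul [DecidableEq m] (A : Matrix l m ℂ) (B : Matrix m n ℂ) :
    frobNorm (A * B) ≤ ‖A‖ * frobNorm B := by
  refine le_of_pow_le_pow_left₀ two_ne_zero (by positivity [frobNorm_nonneg B]) ?_
  rw [sq_frobNorm_eq_sum_sq_norm_col, mul_pow, sq_frobNorm_eq_sum_sq_norm_col, Finset.mul_sum]
  refine Finset.sum_le_sum fun j _ => ?_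
  rw [← mul_pow]
  exact pow_le_pow_left₀ (norm_nonneg _) (l2_opNorm_mulVec A (WithLp.toLp 2 fun i => B i j)) 2

lemma frobNorm_mul_le_mul_l2_opNorm [DecidableEq m] [DecidableEq n] (A : Matrix l m ℂ)
    (B : Matrix m n ℂ) : frobNorm (A * B) ≤ frobNorm A * ‖B‖ := by
  rw [← frobNorm_conjTranspose, conjTranspose_mul, mul_comm, ← l2_opNorm_conjTranspose,
    ← frobNorm_conjTranspose A]
  exact frobNorm_mul_le_l2_opNorm_mul _ _

end Frobenius

section L2OpNorm

variable {𝕜 m n p : Type*} [RCLike 𝕜] [Fintype m] [Fintype n] [Fintype p]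

lemma l2_opNorm_one_le [DecidableEq n] : ‖(1 : Matrix n n 𝕜)‖ ≤ 1 := by
  rw [← l2_opNorm_toEuclideanCLM, map_one]
  exact ContinuousLinearMap.norm_id_le

lemma l2_opNorm_le_one_of_conjTranspose_mul_self_eq_one [DecidableEq n] {X : Matrix m n 𝕜}
    (hX : Xᴴ * X = 1) : ‖X‖ ≤ 1 := by
  have h := l2_opNorm_conjTranspose_mul_self X
  rw [hX] at h
  nlinarith [l2_opNorm_one_le (𝕜 := 𝕜) (n := n), norm_nonneg X]

lemma l2_opNorm_le_l2_opNorm_fromRows [DecidableEq m] [DecidableEq n] [DecidableEq p]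
    (A : Matrix m n 𝕜) (B : Matrix p n 𝕜) : ‖A‖ ≤ ‖fromRows A B‖ := by
  set P : Matrix m (m ⊕ p) 𝕜 := fromCols 1 0
  have hP : ‖P‖ ≤ 1 := by
    rw [← l2_opNorm_conjTranspose]
    refine l2_opNorm_le_one_of_conjTranspose_mul_self_eq_one ?_
    simp [P, conjTranspose_fromCols_eq_fromRows_conjTranspose,
      conjTranspose_fromRows_eq_fromCols_conjTranspose, fromCols_mul_fromRows]
  calc ‖A‖ = ‖P * fromRows A B‖ := by simp [P, fromCols_mul_fromRows]
    _ ≤ ‖P‖ * ‖fromRows A B‖ := l2_opNorm_mul _ _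
    _ ≤ ‖fromRows A B‖ := mul_le_of_le_one_left (norm_nonneg _) hP

end L2OpNorm

section Sylvester

variable {m n : Type*} [Fintype m] [Fintype n]

lemma frobNorm_unitary_mul [DecidableEq m] {U : Matrix m m ℂ} (hU : U ∈ unitaryGroup m ℂ)
    (M : Matrix m n ℂ) : frobNorm (U * M) = frobNorm M := by
  have hU' : star U ∈ unitaryGroup m ℂ := Unitary.star_mem hU
  have hnorm : ∀ V ∈ unitaryGroup m ℂ, ‖V‖ ≤ 1 := fun V hV =>
    l2_opNorm_le_one_of_conjTranspose_mul_self_eq_one (Unitary.star_mul_self_of_mem hV)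
  refine le_antisymm ?_ ?_
  · exact (frobNorm_mul_le_l2_opNorm_mul U M).trans
      (mul_le_of_le_one_left (frobNorm_nonneg M) (hnorm U hU))
  · calc frobNorm M = frobNorm (star U * (U * M)) := by
          rw [← Matrix.mul_assoc, Unitary.star_mul_self_of_mem hU, Matrix.one_mul]
      _ ≤ frobNorm (U * M) := (frobNorm_mul_le_l2_opNorm_mul _ _).trans
          (mul_le_of_le_one_left (frobNorm_nonneg _) (hnorm _ hU'))

lemma mul_frobNorm_le_of_forall_mul_norm_le {M N : Matrix m n ℂ} {c : ℝ}
    (h : ∀ i j, c * ‖M i j‖ ≤ ‖N i j‖) : c * frobNorm M ≤ frobNorm N := by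
  rcases lt_or_ge c 0 with hc | hc
  · exact (mul_nonpos_of_nonpos_of_nonneg hc.le (frobNorm_nonneg M)).trans (frobNorm_nonneg N)
  refine le_of_pow_le_pow_left₀ two_ne_zero (frobNorm_nonneg N) ?_
  rw [mul_pow, sq_frobNorm, sq_frobNorm, Finset.mul_sum]
  refine Finset.sum_le_sum fun i _ => ?_
  rw [Finset.mul_sum]
  refine Finset.sum_le_sum fun j _ => ?_
  rw [← mul_pow]
  exact pow_le_pow_left₀ (by positivity) (h i j) 2

lemma mul_frobNorm_le_frobNorm_mul_diagonal_sub_diagonal_mul [DecidableEq m] [DecidableEq n]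
    {d : n → ℝ} {e : m → ℝ} {δ : ℝ} (hδ : ∀ i j, δ ≤ |d j - e i|) (Y : Matrix m n ℂ) :
    δ * frobNorm Y ≤
      frobNorm (Y * diagonal (fun j => (d j : ℂ)) - diagonal (fun i => (e i : ℂ)) * Y) := by
  refine mul_frobNorm_le_of_forall_mul_norm_le fun i j => ?_
  have hentry : (Y * diagonal (fun j => (d j : ℂ)) - diagonal (fun i => (e i : ℂ)) * Y) i j
      = Y i j * ((d j - e i : ℝ) : ℂ) := by
    simp only [Matrix.sub_apply, mul_diagonal, diagonal_mul, Complex.ofReal_sub]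
    ring
  rw [hentry, norm_mul, Complex.norm_real, Real.norm_eq_abs, mul_comm]
  exact mul_le_mul_of_nonneg_left (hδ i j) (norm_nonneg _)

lemma Matrix.IsHermitian.star_eigenvectorUnitary_mul {𝕜 : Type*} [RCLike 𝕜] [DecidableEq m]
    {A : Matrix m m 𝕜} (hA : A.IsHermitian) :
    star (hA.eigenvectorUnitary : Matrix m m 𝕜) * A =
      diagonal (fun i => (hA.eigenvalues i : 𝕜)) * star (hA.eigenvectorUnitary : Matrix m m 𝕜) := by
  rw [show (fun i => (hA.eigenvalues i : 𝕜)) = RCLike.ofReal ∘ hA.eigenvalues from rfl,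
    ← hA.conjStarAlgAut_star_eigenvectorUnitary, Unitary.conjStarAlgAut_apply, Unitary.coe_star,
    star_star, Matrix.mul_assoc, Matrix.mul_assoc,
    Unitary.mul_star_self_of_mem hA.eigenvectorUnitary.2, Matrix.mul_one]

lemma Matrix.IsHermitian.mul_frobNorm_le_frobNorm_mul_diagonal_sub_mul [DecidableEq m]
    [DecidableEq n] {A : Matrix m m ℂ} (hA : A.IsHermitian) {d : n → ℝ} {δ : ℝ}
    (hδ : ∀ i j, δ ≤ |d j - hA.eigenvalues i|) (Z : Matrix m n ℂ) :
    δ * frobNorm Z ≤ frobNorm (Z * diagonal (fun j => (d j : ℂ)) - A * Z) := by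
  set U : Matrix m m ℂ := star hA.eigenvectorUnitary
  have hU : U ∈ unitaryGroup m ℂ := (star hA.eigenvectorUnitary).2
  have hUA : U * A = diagonal (fun i => (hA.eigenvalues i : ℂ)) * U :=
    hA.star_eigenvectorUnitary_mul
  have hconj : U * (Z * diagonal (fun j => (d j : ℂ)) - A * Z)
      = (U * Z) * diagonal (fun j => (d j : ℂ))
        - diagonal (fun i => (hA.eigenvalues i : ℂ)) * (U * Z) := by
    simp only [Matrix.mul_sub, ← Matrix.mul_assoc, hUA]
  calc δ * frobNorm Z = δ * frobNorm (U * Z) := by rw [frobNorm_unitary_mul hU]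
    _ ≤ frobNorm (U * (Z * diagonal (fun j => (d j : ℂ)) - A * Z)) :=
        hconj ▸ mul_frobNorm_le_frobNorm_mul_diagonal_sub_diagonal_mul hδ _
    _ = frobNorm (Z * diagonal (fun j => (d j : ℂ)) - A * Z) := frobNorm_unitary_mul hU _

end Sylvester

lemma Matrix.fromRows_add {α m₁ m₂ n : Type*} [Add α] (A₁ B₁ : Matrix m₁ n α)
    (A₂ B₂ : Matrix m₂ n α) :
    fromRows A₁ A₂ + fromRows B₁ B₂ = fromRows (A₁ + B₁) (A₂ + B₂) := by
  ext (_ | _) _ <;> rfl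

lemma sylvester_equations_of_fromBlocks_mul_eq {α a b c q : Type*} [Ring α] [StarRing α]
    [Fintype a] [Fintype b] [Fintype c] [Fintype q] [DecidableEq a] [DecidableEq b]
    {d : a ⊕ b → α} {R₁ : Matrix c a α} {R₂ : Matrix c b α} {A : Matrix c c α}
    {W : Matrix a q α} {Y : Matrix b q α} {Z : Matrix c q α} {Λ : Matrix q q α}
    (h : fromBlocks (diagonal d) (fromCols R₁ R₂)ᴴ (fromCols R₁ R₂) A
        * fromRows (fromRows W Y) Z = fromRows (fromRows W Y) Z * Λ) :
    Y * Λ - diagonal (d ∘ Sum.inr) * Y = R₂ᴴ * Z ∧ Z * Λ - A * Z = R₁ * W + R₂ * Y := by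
  rw [← Sum.elim_comp_inl_inr d] at h
  simp only [← fromBlocks_diagonal, conjTranspose_fromCols_eq_fromRows_conjTranspose,
    fromBlocks_mul_fromRows, fromRows_mul, fromCols_mul_fromRows, fromRows_add,
    fromRows_ext_iff] at h
  obtain ⟨⟨-, hY⟩, hZ⟩ := h
  exact ⟨by rw [← hY, Matrix.zero_mul, zero_add, add_sub_cancel_left],
    by rw [← hZ, add_sub_cancel_right]⟩

lemma ciInf_ciInf_le_of_finite {α ι κ : Type*} [ConditionallyCompleteLinearOrder α] [Finite ι]
    [Finite κ] (f : ι → κ → α) (i : ι) (j : κ) : ⨅ i, ⨅ j, f i j ≤ f i j :=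
  (ciInf_le (Finite.bddBelow_range _) i).trans (ciInf_le (Finite.bddBelow_range _) j)

lemma sqrt_sq_add_sq_le_of_coupled_bounds {gap Gap r s y z : ℝ} (hgap : 0 < gap)
    (hGap : s ^ 2 / gap < Gap) (hs : 0 ≤ s) (hy : 0 ≤ y) (hz : 0 ≤ z)
    (hyz : gap * y ≤ s * z) (hzy : Gap * z ≤ r + s * y) :
    √(y ^ 2 + z ^ 2) ≤ r / (Gap - s ^ 2 / gap) * √(1 + s ^ 2 / gap ^ 2) := by
  have hy' : y ≤ s / gap * z := by
    rw [div_mul_eq_mul_div, le_div_iff₀ hgap]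
    linarith
  have hz' : z ≤ r / (Gap - s ^ 2 / gap) := by
    rw [le_div_iff₀ (sub_pos.2 hGap)]
    have hsy := mul_le_mul_of_nonneg_left hy' hs
    have : s * (s / gap * z) = s ^ 2 / gap * z := by ring
    nlinarith
  calc √(y ^ 2 + z ^ 2) ≤ √(z ^ 2 * (1 + s ^ 2 / gap ^ 2)) := by
        gcongr
        have : (s / gap * z) ^ 2 = z ^ 2 * (s ^ 2 / gap ^ 2) := by ring
        nlinarith [pow_le_pow_left₀ hy hy' 2]
    _ = z * √(1 + s ^ 2 / gap ^ 2) := by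
        rw [Real.sqrt_mul (sq_nonneg z), Real.sqrt_sq hz]
    _ ≤ r / (Gap - s ^ 2 / gap) * √(1 + s ^ 2 / gap ^ 2) := by gcongr

theorem subspace_refined_bound_frobenius_general
    {k n k₁ : ℕ}
    (lamhat1 : Fin k₁ → ℝ) (lamhat2 : Fin (k - k₁) → ℝ)
    (R : Matrix (Fin (n - k)) (Fin k₁ ⊕ Fin (k - k₁)) ℂ)
    (A3 : Matrix (Fin (n - k)) (Fin (n - k)) ℂ) (hA3 : A3.IsHermitian)
    (X : Matrix ((Fin k₁ ⊕ Fin (k - k₁)) ⊕ Fin (n - k)) (Fin k₁) ℂ)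
    (hX : Xᴴ * X = 1)
    (Lam1 : Fin k₁ → ℝ)
    (heig :
      (Matrix.fromBlocks
          (Matrix.diagonal fun i => Complex.ofReal (Sum.elim lamhat1 lamhat2 i))
          Rᴴ R A3) * X = X * Matrix.diagonal fun i => Complex.ofReal (Lam1 i))
    (Gap gap : ℝ)
    (hGapDef : Gap = ⨅ i, ⨅ j, |Lam1 i - hA3.eigenvalues j|)
    (hgapDef : gap = ⨅ i, ⨅ j, |Lam1 i - lamhat2 j|)
    (hgap : 0 < gap)
    (hGap : ‖R.submatrix id Sum.inr‖ ^ 2 / gap < Gap) :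
    frobNorm (X.submatrix (Sum.elim (fun i => Sum.inl (Sum.inr i)) Sum.inr) id) ≤
      (frobNorm (R.submatrix id Sum.inl) / (Gap - ‖R.submatrix id Sum.inr‖ ^ 2 / gap)) *
        Real.sqrt (1 + ‖R.submatrix id Sum.inr‖ ^ 2 / gap ^ 2) := by
  obtain ⟨R₁, R₂, rfl⟩ : ∃ R₁ R₂, R = fromCols R₁ R₂ := ⟨_, _, (fromCols_toCols R).symm⟩
  obtain ⟨W, Y, Z, rfl⟩ : ∃ W Y Z, X = fromRows (fromRows W Y) Z :=
    ⟨_, _, _, by rw [fromRows_toRows, fromRows_toRows]⟩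
  obtain ⟨hYeq, hZeq⟩ := sylvester_equations_of_fromBlocks_mul_eq heig
  have hgap_le (j i) : gap ≤ |Lam1 i - lamhat2 j| := hgapDef ▸ ciInf_ciInf_le_of_finite _ i j
  have hGap_le (l i) : Gap ≤ |Lam1 i - hA3.eigenvalues l| :=
    hGapDef ▸ ciInf_ciInf_le_of_finite _ i l
  have hW : ‖W‖ ≤ 1 := (l2_opNorm_le_l2_opNorm_fromRows W Y).trans <|
    (l2_opNorm_le_l2_opNorm_fromRows _ Z).trans <|
      l2_opNorm_le_one_of_conjTranspose_mul_self_eq_one hX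
  have hY : gap * frobNorm Y ≤ ‖R₂‖ * frobNorm Z := calc
    gap * frobNorm Y ≤ frobNorm (R₂ᴴ * Z) :=
      hYeq ▸ mul_frobNorm_le_frobNorm_mul_diagonal_sub_diagonal_mul hgap_le Y
    _ ≤ ‖R₂‖ * frobNorm Z := by
      simpa only [l2_opNorm_conjTranspose] using frobNorm_mul_le_l2_opNorm_mul R₂ᴴ Z
  have hZ : Gap * frobNorm Z ≤ frobNorm R₁ + ‖R₂‖ * frobNorm Y := calc
    Gap * frobNorm Z ≤ frobNorm (R₁ * W + R₂ * Y) :=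
      hZeq ▸ hA3.mul_frobNorm_le_frobNorm_mul_diagonal_sub_mul hGap_le Z
    _ ≤ frobNorm R₁ * ‖W‖ + ‖R₂‖ * frobNorm Y := (frobNorm_add_le _ _).trans <|
      add_le_add (frobNorm_mul_le_mul_l2_opNorm R₁ W) (frobNorm_mul_le_l2_opNorm_mul R₂ Y)
    _ ≤ frobNorm R₁ + ‖R₂‖ * frobNorm Y := by
      gcongr
      exact mul_le_of_le_one_right (frobNorm_nonneg R₁) hW
  have hYZ : (fromRows (fromRows W Y) Z).submatrix
      (Sum.elim (fun i => Sum.inl (Sum.inr i)) Sum.inr) id = fromRows Y Z := by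
    ext (i | i) j <;> rfl
  rw [hYZ, frobNorm_fromRows]
  exact sqrt_sq_add_sq_le_of_coupled_bounds hgap hGap (norm_nonneg R₂) (frobNorm_nonneg Y)
    (frobNorm_nonneg Z) hY hZ

/-- Theorem 5.1, bound (5.3) of the paper: if `gap > 0` and `Gap > ‖R₂‖²/gap`, then
`‖[Y; Z]‖_F ≤ (‖R₁‖_F/(Gap − ‖R₂‖²/gap)) · √(1 + ‖R₂‖²/gap²)`. -/
theorem subspace_refined_bound_frobenius
    {k n k₁ : ℕ} (hk : 2 ≤ k) (hkn : k ≤ n) (hk₁ : 1 ≤ k₁) (hk₁k : k₁ < k)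
    (lamhat1 : Fin k₁ → ℝ) (lamhat2 : Fin (k - k₁) → ℝ)
    (R : Matrix (Fin (n - k)) (Fin k₁ ⊕ Fin (k - k₁)) ℂ)
    (A3 : Matrix (Fin (n - k)) (Fin (n - k)) ℂ) (hA3 : A3.IsHermitian)
    (X : Matrix ((Fin k₁ ⊕ Fin (k - k₁)) ⊕ Fin (n - k)) (Fin k₁) ℂ)
    (hX : Xᴴ * X = 1)
    (Lam1 : Fin k₁ → ℝ)
    (heig :
      (Matrix.fromBlocks
          (Matrix.diagonal fun i => Complex.ofReal (Sum.elim lamhat1 lamhat2 i))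
          Rᴴ R A3) * X = X * Matrix.diagonal fun i => Complex.ofReal (Lam1 i))
    (Gap gap : ℝ)
    (hGapDef : Gap = ⨅ i, ⨅ j, |Lam1 i - hA3.eigenvalues j|)
    (hgapDef : gap = ⨅ i, ⨅ j, |Lam1 i - lamhat2 j|)
    (hgap : 0 < gap)
    (hGap : ‖R.submatrix id Sum.inr‖ ^ 2 / gap < Gap) :
    frobNorm (X.submatrix (Sum.elim (fun i => Sum.inl (Sum.inr i)) Sum.inr) id) ≤
      (frobNorm (R.submatrix id Sum.inl) / (Gap - ‖R.submatrix id Sum.inr‖ ^ 2 / gap)) *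
        Real.sqrt (1 + ‖R.submatrix id Sum.inr‖ ^ 2 / gap ^ 2) :=
  subspace_refined_bound_frobenius_general lamhat1 lamhat2 R A3 hA3 X hX Lam1 heig Gap gap hGapDef
    hgapDef hgap hGap
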